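/- arXiv:2209.13286 — 2 statements merged into one kernel-verified Lean document; each statement's English description precedes it below -/
import Mathlib

section
/- Let P be a bounded projection commuting with e^{At}, with ‖e^{At}P‖ ≤ M e^{γ₁ t} for t ≤ 0 (M ≥ 1, γ₁ > 0). Suppose p(t) = Pu(t) satisfies p(τ) = e^{A(τ−t)}p(t) + ∫_t^τ e^{A(τ−s)} P f(u(s)) ds for t ≥ τ, with ‖f(v)‖ ≤ C_f. Then ‖p(t)‖ ≥ e^{γ₁(t−τ)}( (1/M)‖p(τ)‖ − C_f/γ₁ ) for all t ≥ τ. In particular, if ‖p(τ)‖ > M C_f/γ₁ then ‖p(t)‖ → ∞ exponentially as t → ∞. -/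
open Set Filter Metric Bornology Topology intervalIntegral

/-! Read the Duhamel identity backwards from `t` to `τ ≤ t`: the backward bound on `e^{A(τ−t)}P`
gives `‖p(τ)‖ ≤ M e^{−γ₁(t−τ)}‖p(t)‖ + M C_f/γ₁`, the forcing term contributing at most
`∫_τ^∞ M C_f e^{−γ₁(s−τ)} ds`. Solving for `‖p(t)‖` is the claimed exponential lower bound, which
diverges as soon as its constant `‖p(τ)‖/M − C_f/γ₁` is positive. -/

lemma integral_exp_mul_sub (γ τ t : ℝ) (hγ : γ ≠ 0) :
    ∫ s in τ..t, Real.exp (γ * (τ - s)) = (1 - Real.exp (γ * (τ - t))) / γ := by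
  rw [integral_comp_sub_left (fun x => Real.exp (γ * x)), integral_comp_mul_left _ hγ,
    integral_exp]
  simp only [sub_self, mul_zero, Real.exp_zero, smul_eq_mul]
  field_simp

lemma norm_integral_le_of_norm_le_mul_exp {E : Type*} [NormedAddCommGroup E]
    [NormedSpace ℝ E] {g : ℝ → E} {C γ τ t : ℝ} (hC : 0 ≤ C) (hγ : 0 < γ) (hτt : τ ≤ t)
    (hg : ∀ s ∈ Ioc τ t, ‖g s‖ ≤ C * Real.exp (γ * (τ - s))) :
    ‖∫ s in τ..t, g s‖ ≤ C / γ := by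
  have hint : IntervalIntegrable (fun s => C * Real.exp (γ * (τ - s))) MeasureTheory.volume τ t :=
    (by fun_prop : Continuous fun s => C * Real.exp (γ * (τ - s))).intervalIntegrable τ t
  have hexp : 0 ≤ C * Real.exp (γ * (τ - t)) / γ := by positivity
  calc ‖∫ s in τ..t, g s‖ ≤ ∫ s in τ..t, C * Real.exp (γ * (τ - s)) :=
        norm_integral_le_of_norm_le hτt (.of_forall hg) hint
    _ = C / γ - C * Real.exp (γ * (τ - t)) / γ := by
        rw [integral_const_mul, integral_exp_mul_sub γ τ t hγ.ne']
        ring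
    _ ≤ C / γ := by linarith

section BackwardDuhamel

variable {X : Type*} [NormedAddCommGroup X] [NormedSpace ℝ X]
  {T : ℝ → X →L[ℝ] X} {P : X →L[ℝ] X} {M γ : ℝ}

lemma norm_apply_comp_le_of_opNorm_le
    (hbound : ∀ s : ℝ, s ≤ 0 → ‖(T s).comp P‖ ≤ M * Real.exp (γ * s)) {s : ℝ} (hs : s ≤ 0)
    (x : X) : ‖T s (P x)‖ ≤ M * Real.exp (γ * s) * ‖x‖ :=
  ((T s).comp P).le_of_opNorm_le (hbound s hs) x

lemma norm_le_of_backward_duhamel (hγ : 0 < γ)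
    (hbound : ∀ s : ℝ, s ≤ 0 → ‖(T s).comp P‖ ≤ M * Real.exp (γ * s))
    {g : ℝ → X} {C : ℝ} (hC : 0 ≤ C) (hg : ∀ s, ‖g s‖ ≤ C)
    {x y : X} {τ t : ℝ} (hτt : τ ≤ t)
    (hduhamel : y = T (τ - t) (P x) + ∫ s in t..τ, T (τ - s) (P (g s))) :
    ‖y‖ ≤ M * Real.exp (γ * (τ - t)) * ‖x‖ + M * C / γ := by
  have hM : 0 ≤ M := by
    simpa using (norm_nonneg _).trans (hbound 0 le_rfl)
  have hforcing : ‖∫ s in t..τ, T (τ - s) (P (g s))‖ ≤ M * C / γ := by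
    rw [integral_symm, norm_neg]
    refine norm_integral_le_of_norm_le_mul_exp (by positivity) hγ hτt fun s hs => ?_
    calc ‖T (τ - s) (P (g s))‖ ≤ M * Real.exp (γ * (τ - s)) * ‖g s‖ :=
          norm_apply_comp_le_of_opNorm_le hbound (by linarith [hs.1]) _
      _ ≤ M * Real.exp (γ * (τ - s)) * C := by gcongr; exact hg s
      _ = M * C * Real.exp (γ * (τ - s)) := by ring
  calc ‖y‖ ≤ ‖T (τ - t) (P x)‖ + ‖∫ s in t..τ, T (τ - s) (P (g s))‖ :=
        hduhamel ▸ norm_add_le _ _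
    _ ≤ M * Real.exp (γ * (τ - t)) * ‖x‖ + M * C / γ :=
        add_le_add (norm_apply_comp_le_of_opNorm_le hbound (by linarith) x) hforcing

end BackwardDuhamel

lemma exp_mul_sub_le_of_le_exp_mul_add {a b M γ C τ t : ℝ} (hM : 0 < M)
    (h : a ≤ M * Real.exp (γ * (τ - t)) * b + M * C / γ) :
    Real.exp (γ * (t - τ)) * ((1 / M) * a - C / γ) ≤ b := by
  have hexp : Real.exp (γ * (t - τ)) * Real.exp (γ * (τ - t)) = 1 := by
    rw [← Real.exp_add, show γ * (t - τ) + γ * (τ - t) = 0 by ring, Real.exp_zero]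
  have hdiv : (1 / M) * a - C / γ ≤ Real.exp (γ * (τ - t)) * b := by
    rw [one_div, inv_mul_eq_div, sub_le_iff_le_add, div_le_iff₀ hM]
    linarith [show (Real.exp (γ * (τ - t)) * b + C / γ) * M
      = M * Real.exp (γ * (τ - t)) * b + M * C / γ by ring]
  calc Real.exp (γ * (t - τ)) * ((1 / M) * a - C / γ)
      ≤ Real.exp (γ * (t - τ)) * (Real.exp (γ * (τ - t)) * b) := by gcongr
    _ = b := by rw [← mul_assoc, hexp, one_mul]

lemma tendsto_atTop_of_exp_mul_le {φ : ℝ → ℝ} {γ c τ : ℝ} (hγ : 0 < γ) (hc : 0 < c)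
    (h : ∀ t, τ ≤ t → Real.exp (γ * (t - τ)) * c ≤ φ t) : Tendsto φ atTop atTop := by
  have hexp : Tendsto (fun t => Real.exp (γ * (t - τ)) * c) atTop atTop :=
    (Real.tendsto_exp_atTop.comp <| (tendsto_atTop_add_const_right _ _ tendsto_id).const_mul_atTop
      hγ).atTop_mul_const hc
  exact tendsto_atTop_mono' atTop ((eventually_ge_atTop τ).mono h) hexp

theorem stmt9_general {X : Type*} [NormedAddCommGroup X] [NormedSpace ℝ X]
    (T : ℝ → X →L[ℝ] X) (P : X →L[ℝ] X) (f : X → X) (u : ℝ → X)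
    (M γ₁ Cf : ℝ) (hM : 1 ≤ M) (hγ₁ : 0 < γ₁) (hCf : 0 ≤ Cf)
    (hP : P.comp P = P)
    (hbound : ∀ t : ℝ, t ≤ 0 → ‖(T t).comp P‖ ≤ M * Real.exp (γ₁ * t))
    (hf : ∀ v : X, ‖f v‖ ≤ Cf)
    (hp : ∀ τ t : ℝ, τ ≤ t →
      P (u τ) = T (τ - t) (P (u t)) + ∫ s in t..τ, T (τ - s) (P (f (u s)))) :
    (∀ τ t : ℝ, τ ≤ t →
      Real.exp (γ₁ * (t - τ)) * ((1 / M) * ‖P (u τ)‖ - Cf / γ₁) ≤ ‖P (u t)‖) ∧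
    (∀ τ : ℝ, M * Cf / γ₁ < ‖P (u τ)‖ →
      Tendsto (fun t => ‖P (u t)‖) atTop atTop) := by
  have hM₀ : 0 < M := by linarith
  have hPP (x : X) : P (P x) = P x := congrArg (· x) hP
  have hlower : ∀ τ t : ℝ, τ ≤ t →
      Real.exp (γ₁ * (t - τ)) * ((1 / M) * ‖P (u τ)‖ - Cf / γ₁) ≤ ‖P (u t)‖ := by
    intro τ t hτt
    refine exp_mul_sub_le_of_le_exp_mul_add hM₀ <|
      norm_le_of_backward_duhamel hγ₁ hbound hCf (fun s => hf (u s)) hτt ?_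
    rw [hPP]
    exact hp τ t hτt
  refine ⟨hlower, fun τ hτ => tendsto_atTop_of_exp_mul_le hγ₁ ?_ (hlower τ)⟩
  rw [sub_pos, one_div, inv_mul_eq_div, lt_div_iff₀ hM₀]
  linarith [show Cf / γ₁ * M = M * Cf / γ₁ by ring]

/-- If `p(t) = Pu(t)` obeys the backward Duhamel identity with
`‖e^{At}P‖ ≤ M e^{γ₁ t}` for `t ≤ 0` and `‖f‖ ≤ C_f`, then
`‖p(t)‖ ≥ e^{γ₁(t−τ)}((1/M)‖p(τ)‖ − C_f/γ₁)` for `t ≥ τ`; in particular, if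
`‖p(τ)‖ > M C_f/γ₁` then `‖p(t)‖ → ∞` as `t → ∞`. -/
theorem stmt9 {X : Type*} [NormedAddCommGroup X] [NormedSpace ℝ X] [CompleteSpace X]
    (T : ℝ → X →L[ℝ] X) (P : X →L[ℝ] X) (f : X → X) (u : ℝ → X)
    (M γ₁ Cf : ℝ) (hM : 1 ≤ M) (hγ₁ : 0 < γ₁) (hCf : 0 ≤ Cf)
    (hP : P.comp P = P)
    (hbound : ∀ t : ℝ, t ≤ 0 → ‖(T t).comp P‖ ≤ M * Real.exp (γ₁ * t))
    (hf : ∀ v : X, ‖f v‖ ≤ Cf)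
    (hfu : Continuous fun s => f (u s))
    (hp : ∀ τ t : ℝ, τ ≤ t →
      P (u τ) = T (τ - t) (P (u t)) + ∫ s in t..τ, T (τ - s) (P (f (u s)))) :
    (∀ τ t : ℝ, τ ≤ t →
      Real.exp (γ₁ * (t - τ)) * ((1 / M) * ‖P (u τ)‖ - Cf / γ₁) ≤ ‖P (u t)‖) ∧
    (∀ τ : ℝ, M * Cf / γ₁ < ‖P (u τ)‖ →
      Tendsto (fun t => ‖P (u t)‖) atTop atTop) :=
  stmt9_general T P f u M γ₁ Cf hM hγ₁ hCf hP hbound hf hp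
end

section
/- Let {S(t)}_{t≥0} be a continuous semigroup on a Banach space X satisfying: if u ∈ J \ J_b then whenever S(t_n)u ∈ H_R for a sequence t_n → ∞ and some R ≥ R_0, it follows that {S(t)u : t ≥ 0} is contained in H_R. Then for every u ∈ J \ J_b (i.e., u lies on a solution bounded in the past but the forward orbit {S(t)u : t ≥ 0} is unbounded), one has lim_{t→∞} ‖S(t)u‖ = ∞. -/
open Set Filter Metric Bornology Topology

/-! If `‖S t u‖` does not tend to infinity, the orbit of `u` returns to a fixed bounded set,
hence to a fixed `H R`, at arbitrarily large times. The return hypothesis then traps the whole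
forward orbit in the bounded set `H R`, contradicting its unboundedness. -/

theorem exists_seq_tendsto_forall_mem_bounded_of_not_tendsto_cobounded
    {ι α : Type*} [Bornology α] {l : Filter ι} [l.IsCountablyGenerated] {f : ι → α}
    (h : ¬ Tendsto f l (cobounded α)) :
    ∃ B : Set α, IsBounded B ∧ ∃ tseq : ℕ → ι, Tendsto tseq atTop l ∧ ∀ n, f (tseq n) ∈ B := by
  obtain ⟨s, hs, hfreq⟩ := not_tendsto_iff_exists_frequently_notMem.mp h
  obtain ⟨tseq, htseq, hmem⟩ := exists_seq_forall_of_frequently hfreq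
  exact ⟨sᶜ, isBounded_compl_iff.mpr hs, tseq, htseq, hmem⟩

theorem stmt14_general {X : Type*} [NormedAddCommGroup X]
    (S : ℝ → X → X)
    (J Jb : Set X) (R₀ : ℝ) (H : ℝ → Set X)
    (hHbdd : ∀ R : ℝ, R₀ ≤ R → Bornology.IsBounded (H R))
    (hHabs : ∀ B : Set X, Bornology.IsBounded B → ∃ R : ℝ, R₀ ≤ R ∧ B ⊆ H R)
    (hkey : ∀ u ∈ J \ Jb, ∀ R : ℝ, R₀ ≤ R →
      (∃ tseq : ℕ → ℝ, Tendsto tseq atTop atTop ∧ ∀ n, S (tseq n) u ∈ H R) →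
      ∀ t : ℝ, 0 ≤ t → S t u ∈ H R)
    (hunbdd : ∀ u ∈ J \ Jb,
      ¬ Bornology.IsBounded ((fun t : ℝ => S t u) '' Set.Ici 0)) :
    ∀ u ∈ J \ Jb, Tendsto (fun t : ℝ => ‖S t u‖) atTop atTop := by
  intro u hu
  rw [tendsto_norm_atTop_iff_cobounded]
  by_contra hnot
  obtain ⟨B, hB, tseq, htseq, hmem⟩ :=
    exists_seq_tendsto_forall_mem_bounded_of_not_tendsto_cobounded hnot
  obtain ⟨R, hR₀, hBR⟩ := hHabs B hB
  have horbit : (fun t : ℝ => S t u) '' Ici 0 ⊆ H R := by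
    rintro _ ⟨t, ht, rfl⟩
    exact hkey u hu R hR₀ ⟨tseq, htseq, fun n => hBR (hmem n)⟩ t ht
  exact hunbdd u hu ((hHbdd R hR₀).subset horbit)

/-- Suppose that whenever a point `u ∈ J \ J_b` returns to some `H_R`
(`R ≥ R₀`) along a sequence of times tending to infinity, its whole forward orbit stays in
`H_R`; and that the forward orbit of each `u ∈ J \ J_b` is unbounded. If each `H_R` is bounded
and every bounded set is contained in some `H_R` (`R ≥ R₀`), then `‖S(t)u‖ → ∞` as `t → ∞`
for every `u ∈ J \ J_b`. -/
theorem stmt14 {X : Type*} [NormedAddCommGroup X] [NormedSpace ℝ X] [CompleteSpace X]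
    (S : ℝ → X → X)
    (hS0 : ∀ x, S 0 x = x)
    (hSadd : ∀ t s : ℝ, 0 ≤ t → 0 ≤ s → ∀ x, S (t + s) x = S t (S s x))
    (J Jb : Set X) (R₀ : ℝ) (H : ℝ → Set X)
    (hHbdd : ∀ R : ℝ, R₀ ≤ R → Bornology.IsBounded (H R))
    (hHabs : ∀ B : Set X, Bornology.IsBounded B → ∃ R : ℝ, R₀ ≤ R ∧ B ⊆ H R)
    (hkey : ∀ u ∈ J \ Jb, ∀ R : ℝ, R₀ ≤ R →
      (∃ tseq : ℕ → ℝ, Tendsto tseq atTop atTop ∧ ∀ n, S (tseq n) u ∈ H R) →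
      ∀ t : ℝ, 0 ≤ t → S t u ∈ H R)
    (hunbdd : ∀ u ∈ J \ Jb,
      ¬ Bornology.IsBounded ((fun t : ℝ => S t u) '' Set.Ici 0)) :
    ∀ u ∈ J \ Jb, Tendsto (fun t : ℝ => ‖S t u‖) atTop atTop :=
  stmt14_general S J Jb R₀ H hHbdd hHabs hkey hunbdd
end
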